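/- Let H be a connected k-uniform hypergraph with at least two vertices. Then the smallest signless Laplacian eigenvalue satisfies q_min(H) ≤ d_max − 1/(k-1), where d_max is the maximum degree. -/

import Mathlib

open Finset

/-- The set of hyperedges containing both `i` and `j`. -/
def edgesBetween {n : ℕ} (E : Finset (Finset (Fin n))) (i j : Fin n) :
    Finset (Finset (Fin n)) :=
  E.filter fun e => i ∈ e ∧ j ∈ e

/-- The degree of vertex `i`: the number of hyperedges containing `i`. -/
def hdeg {n : ℕ} (E : Finset (Finset (Fin n))) (i : Fin n) : ℕ :=
  (E.filter fun e => i ∈ e).card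

/-- Two (distinct) vertices are adjacent if some hyperedge contains both. -/
def Adj {n : ℕ} (E : Finset (Finset (Fin n))) (i j : Fin n) : Prop :=
  i ≠ j ∧ ∃ e ∈ E, i ∈ e ∧ j ∈ e

/-- The neighbours of a vertex. -/
noncomputable def neighbors {n : ℕ} (E : Finset (Finset (Fin n))) (i : Fin n) :
    Finset (Fin n) :=
  @Finset.filter _ (fun j => Adj E i j) (Classical.decPred _) Finset.univ

/-- Banerjee's adjacency matrix of a hypergraph: `A i j = ∑_{e ∋ i,j} 1/(|e|-1)`. -/
noncomputable def adjMat {n : ℕ} (E : Finset (Finset (Fin n))) :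
    Matrix (Fin n) (Fin n) ℝ :=
  Matrix.of fun i j =>
    if i = j then 0 else ∑ e ∈ edgesBetween E i j, 1 / ((e.card : ℝ) - 1)

/-- The signless Laplacian matrix `Q = D + A`. -/
noncomputable def signlessLap {n : ℕ} (E : Finset (Finset (Fin n))) :
    Matrix (Fin n) (Fin n) ℝ :=
  Matrix.diagonal (fun i => (hdeg E i : ℝ)) + adjMat E

/-- Largest eigenvalue of a real matrix. -/
noncomputable def qmax {n : ℕ} (M : Matrix (Fin n) (Fin n) ℝ) : ℝ :=
  sSup (spectrum ℝ M)

/-- Smallest eigenvalue of a real matrix. -/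
noncomputable def qmin {n : ℕ} (M : Matrix (Fin n) (Fin n) ℝ) : ℝ :=
  sInf (spectrum ℝ M)

/-- A hypergraph is `k`-uniform if every hyperedge has exactly `k` vertices. -/
def IsUniform {n : ℕ} (k : ℕ) (E : Finset (Finset (Fin n))) : Prop :=
  ∀ e ∈ E, e.card = k

/-- A hypergraph is connected if any two vertices are joined by a walk. -/
def Conn {n : ℕ} (E : Finset (Finset (Fin n))) : Prop :=
  ∀ i j : Fin n, Relation.ReflTransGen (Adj E) i j

/-! The test vector `x = eᵢ - eⱼ` for an adjacent pair `i ∼ j` has `x ⬝ x = 2` and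
`x ⬝ Q x = dᵢ + dⱼ - 2 Qᵢⱼ`, while `Qᵢⱼ ≥ 1/(k-1)` because some hyperedge (of size `k`) contains
both vertices. Since `Q - q_min I` is positive semidefinite, `2 q_min ≤ dᵢ + dⱼ - 2/(k-1)`. -/

open Matrix

theorem qmin_mul_dotProduct_self_le {n : ℕ} {M : Matrix (Fin n) (Fin n) ℝ} (hM : M.IsHermitian)
    (x : Fin n → ℝ) : qmin M * (x ⬝ᵥ x) ≤ x ⬝ᵥ M *ᵥ x := by
  have hle : ∀ μ ∈ spectrum ℝ M, qmin M ≤ μ := fun _ hμ =>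
    csInf_le (finite_real_spectrum (A := M)).bddBelow hμ
  have hN : (M - algebraMap ℝ _ (qmin M)).IsHermitian :=
    hM.sub (by simp [algebraMap_eq_diagonal])
  have hpsd : (M - algebraMap ℝ _ (qmin M)).PosSemidef := by
    refine hN.posSemidef_iff_eigenvalues_nonneg.2 fun i => ?_
    obtain ⟨μ, hμ, _, rfl, h⟩ :=
      spectrum.sub_singleton_eq M (qmin M) ▸ hN.eigenvalues_mem_spectrum_real i
    simpa [← h] using hle μ hμ
  have := hpsd.dotProduct_mulVec_nonneg x
  simp only [Algebra.algebraMap_eq_smul_one, sub_mulVec, smul_mulVec, one_mulVec,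
    dotProduct_sub, dotProduct_smul, star_trivial, smul_eq_mul] at this
  linarith

theorem single_sub_single_dotProduct_mulVec {R ι : Type*} [CommRing R] [Fintype ι]
    [DecidableEq ι] (M : Matrix ι ι R) (i j : ι) :
    (Pi.single i 1 - Pi.single j 1) ⬝ᵥ M *ᵥ (Pi.single i 1 - Pi.single j 1) =
      M i i + M j j - M i j - M j i := by
  simp only [mulVec_sub, mulVec_single_one, sub_dotProduct, single_one_dotProduct, Pi.sub_apply,
    col_apply]
  ring

theorem two_mul_qmin_le {n : ℕ} {M : Matrix (Fin n) (Fin n) ℝ} (hM : M.IsHermitian)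
    {i j : Fin n} (hij : i ≠ j) : 2 * qmin M ≤ M i i + M j j - 2 * M i j := by
  set y : Fin n → ℝ := Pi.single i 1 - Pi.single j 1
  have hy : y ⬝ᵥ y = 2 := by
    simp [y, hij, hij.symm]
    norm_num
  have hsymm : M j i = M i j := by simpa using hM.apply i j
  have h := qmin_mul_dotProduct_self_le hM y
  rw [hy, single_sub_single_dotProduct_mulVec, hsymm] at h
  linarith

section Hypergraph

variable {n : ℕ} {E : Finset (Finset (Fin n))}

theorem edgesBetween_comm (E : Finset (Finset (Fin n))) (i j : Fin n) :
    edgesBetween E i j = edgesBetween E j i := by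
  simp [edgesBetween, and_comm]

theorem signlessLap_isHermitian (E : Finset (Finset (Fin n))) : (signlessLap E).IsHermitian := by
  refine (isHermitian_diagonal _).add ?_
  ext i j
  rcases eq_or_ne i j with rfl | h
  · simp [adjMat]
  · simp [adjMat, h, h.symm, edgesBetween_comm]

theorem signlessLap_apply_self (E : Finset (Finset (Fin n))) (i : Fin n) :
    signlessLap E i i = hdeg E i := by
  simp [signlessLap, adjMat]

theorem one_div_card_sub_one_le_signlessLap {e : Finset (Fin n)} (he : e ∈ E) {i j : Fin n}
    (hi : i ∈ e) (hj : j ∈ e) (hij : i ≠ j) : 1 / ((e.card : ℝ) - 1) ≤ signlessLap E i j := by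
  have hterm_nonneg : ∀ f ∈ edgesBetween E i j, 0 ≤ 1 / ((f.card : ℝ) - 1) := fun f hf =>
    one_div_nonneg.2 <| sub_nonneg.2 <| by
      exact_mod_cast Finset.card_pos.2 ⟨i, (Finset.mem_filter.1 hf).2.1⟩
  simpa [signlessLap, adjMat, hij] using
    Finset.single_le_sum hterm_nonneg (Finset.mem_filter.2 ⟨he, hi, hj⟩)

theorem exists_adj_of_conn (hc : Conn E) (hn : 2 ≤ n) : ∃ i j, Adj E i j := by
  rcases (hc ⟨0, by omega⟩ ⟨1, by omega⟩).cases_head with h01 | ⟨j, hadj, -⟩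
  · simp [Fin.ext_iff] at h01
  · exact ⟨_, j, hadj⟩

end Hypergraph

theorem stmt_11_general (n k : ℕ) (hn : 2 ≤ n) (E : Finset (Finset (Fin n)))
    (hU : IsUniform k E) (hc : Conn E) :
    qmin (signlessLap E) ≤ (⨆ i : Fin n, (hdeg E i : ℝ)) - 1 / ((k : ℝ) - 1) := by
  obtain ⟨i, j, hij, e, he, hi, hj⟩ := exists_adj_of_conn hc hn
  have hQij := one_div_card_sub_one_le_signlessLap he hi hj hij
  rw [hU e he] at hQij
  have hq := two_mul_qmin_le (signlessLap_isHermitian E) hij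
  rw [signlessLap_apply_self, signlessLap_apply_self] at hq
  have hdeg_le (v : Fin n) : (hdeg E v : ℝ) ≤ ⨆ i, (hdeg E i : ℝ) :=
    le_ciSup (Set.finite_range fun i => (hdeg E i : ℝ)).bddAbove v
  linarith [hdeg_le i, hdeg_le j]

theorem stmt_11 (n k : ℕ) (hn : 2 ≤ n) (hk : 2 ≤ k) (E : Finset (Finset (Fin n)))
    (hU : IsUniform k E) (hc : Conn E) :
    qmin (signlessLap E) ≤ (⨆ i : Fin n, (hdeg E i : ℝ)) - 1 / ((k : ℝ) - 1) :=
  stmt_11_general n k hn E hU hc
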